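/- The bound Pr[Ω ∩ ¬T] ≤ 1/(1 - ε + n·ε) is tight: for every n ≥ 1 and 0 < ε < 1 there exists a probability distribution p on {0,1}^n such that with α = Pr[all X_i = 1] = (1-ε)/(1-ε+nε) and β_j = Pr[X_j = 0, X_i = 1 ∀ i ≠ j] = ε/(1-ε+nε) for every j, one has (1/n)·Σ_{j=1}^n Pr[Ω_j] = 1/(1-ε+nε) and Pr[X_j = 1 | Ω_j] = 1 - ε for all j. -/

import Mathlib

open Finset

/-- `Pr[Ω_j]`: the probability that all boxes except possibly `j` pass. -/
def prOmega (n : ℕ) (p : (Fin n → Bool) → ℝ) (j : Fin n) : ℝ :=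
  ∑ x ∈ univ.filter (fun x : Fin n → Bool => ∀ i, i ≠ j → x i = true), p x

/-- `Pr[all boxes pass]`. -/
def prAll (n : ℕ) (p : (Fin n → Bool) → ℝ) : ℝ :=
  ∑ x ∈ univ.filter (fun x : Fin n → Bool => ∀ i, x i = true), p x

/-!
The extremal distribution puts mass `a` on the all-true string and mass `b` on each string with
exactly one `false`. Then `Ω_j` consists of the all-true string and the string false only at `j`,
so `Pr[all] = a` and `Pr[Ω_j] = a + b`; the choice `a = (1-ε)/D`, `b = ε/D` with
`D = 1 - ε + nε` makes the total mass `a + n b = 1` and the ratio `a / (a + b) = 1 - ε`.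
-/

section TrueExcept

variable {ι : Type*} [DecidableEq ι]

def trueExcept (j : ι) : ι → Bool := Function.update (fun _ => true) j false

@[simp]
theorem trueExcept_self (j : ι) : trueExcept j j = false :=
  Function.update_self ..

theorem trueExcept_of_ne {i j : ι} (h : i ≠ j) : trueExcept j i = true :=
  Function.update_of_ne h ..

theorem trueExcept_ne_true (j : ι) : trueExcept j ≠ fun _ => true :=
  fun h => by simpa using congrFun h j

theorem trueExcept_injective : Function.Injective (trueExcept : ι → ι → Bool) := by
  intro j k h
  by_contra hjk
  simpa [trueExcept_of_ne (Ne.symm hjk)] using congrFun h k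

variable [Fintype ι]

theorem filter_forall_eq_true [DecidablePred fun x : ι → Bool => ∀ i, x i = true] :
    univ.filter (fun x : ι → Bool => ∀ i, x i = true) = {fun _ => true} := by
  ext x
  simp [funext_iff]

theorem filter_forall_ne_eq_true (j : ι)
    [DecidablePred fun x : ι → Bool => ∀ i, i ≠ j → x i = true] :
    univ.filter (fun x : ι → Bool => ∀ i, i ≠ j → x i = true) = {fun _ => true, trueExcept j} := by
  ext x
  simp only [mem_filter, mem_univ, true_and, mem_insert, mem_singleton]
  constructor
  · intro hx
    cases hxj : x j
    · right
      funext i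
      by_cases hij : i = j
      · subst hij; simp [hxj]
      · rw [hx i hij, trueExcept_of_ne hij]
    · left
      funext i
      by_cases hij : i = j
      · subst hij; exact hxj
      · exact hx i hij
  · rintro (rfl | rfl) i hij
    · rfl
    · exact trueExcept_of_ne hij

def trueExceptMass (a b : ℝ) (x : ι → Bool) : ℝ :=
  (if x = fun _ => true then a else 0) + ∑ k, if x = trueExcept k then b else 0

variable {a b : ℝ}

theorem trueExceptMass_nonneg (ha : 0 ≤ a) (hb : 0 ≤ b) (x : ι → Bool) :
    0 ≤ trueExceptMass a b x :=
  add_nonneg (by split_ifs <;> simp [ha]) (sum_nonneg fun _ _ => by split_ifs <;> simp [hb])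

theorem trueExceptMass_true : trueExceptMass a b (fun _ : ι => true) = a := by
  simp [trueExceptMass, eq_comm (a := fun _ => true), trueExcept_ne_true]

theorem trueExceptMass_trueExcept (j : ι) : trueExceptMass a b (trueExcept j) = b := by
  simp [trueExceptMass, trueExcept_ne_true, trueExcept_injective.eq_iff]

theorem sum_trueExceptMass : ∑ x : ι → Bool, trueExceptMass a b x = a + Fintype.card ι * b := by
  simp [trueExceptMass, sum_add_distrib, sum_comm (s := (univ : Finset (ι → Bool)))]

end TrueExcept

theorem prAll_eq (n : ℕ) (p : (Fin n → Bool) → ℝ) : prAll n p = p fun _ => true := by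
  rw [prAll, filter_forall_eq_true, sum_singleton]

theorem prOmega_eq (n : ℕ) (p : (Fin n → Bool) → ℝ) (j : Fin n) :
    prOmega n p j = p (fun _ => true) + p (trueExcept j) := by
  rw [prOmega, filter_forall_ne_eq_true, sum_pair (trueExcept_ne_true j).symm]

/-- Tightness of the cut-and-choose bound: for every `n ≥ 1` and `0 < ε < 1` there is a
distribution with `Pr[all pass] = (1-ε)/(1-ε+nε)`, each `β_j = ε/(1-ε+nε)`,
`(1/n)·Σ_j Pr[Ω_j] = 1/(1-ε+nε)` and `Pr[X_j = 1 | Ω_j] = 1 - ε` for all `j`. -/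
theorem cut_and_choose_bound_tight (n : ℕ) (hn : 1 ≤ n) (ε : ℝ) (hε0 : 0 < ε) (hε1 : ε < 1) :
    ∃ p : (Fin n → Bool) → ℝ, (∀ x, 0 ≤ p x) ∧ (∑ x, p x = 1) ∧
      prAll n p = (1 - ε) / (1 - ε + n * ε) ∧
      (∀ j, prOmega n p j - prAll n p = ε / (1 - ε + n * ε)) ∧
      (1 / (n : ℝ)) * ∑ j : Fin n, prOmega n p j = 1 / (1 - ε + n * ε) ∧
      (∀ j, prAll n p / prOmega n p j = 1 - ε) := by
  set D := 1 - ε + n * ε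
  have hD : 0 < D := by positivity
  have hn0 : (n : ℝ) ≠ 0 := by positivity
  set p : (Fin n → Bool) → ℝ := trueExceptMass ((1 - ε) / D) (ε / D) with hp
  have hAll : prAll n p = (1 - ε) / D := by rw [prAll_eq, hp, trueExceptMass_true]
  have hOmega (j : Fin n) : prOmega n p j = 1 / D := by
    rw [prOmega_eq, hp, trueExceptMass_true, trueExceptMass_trueExcept]
    ring
  refine ⟨p, trueExceptMass_nonneg (by bound) (by positivity), ?_, hAll, ?_, ?_, ?_⟩
  · rw [hp, sum_trueExceptMass, Fintype.card_fin]
    field_simp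
    ring
  · intro j
    rw [hOmega, hAll]
    ring
  · simp only [hOmega, sum_const, card_univ, Fintype.card_fin, nsmul_eq_mul]
    field_simp
  · intro j
    rw [hOmega, hAll]
    field_simp
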